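/- Let |ρ| < 1 and let s : ℝ → ℝ be measurable with (1-ρ²)s(x)² < 1 for all x and ∫ s(x) φ(x) dx = S (with Z ~ N(0,1), E[s(Z)] = S). Define h(x) = s(x) / √(1 - (1-ρ²)s(x)²). Then h(x)/√(1 + (1-ρ²)h(x)²) = s(x) for all x, and consequently, for (X,Y) with density 2 φ_2(x,y; ρ) Φ((y-ρx)h(x)), E[Y] = √(2/π)(1-ρ²) S. -/

import Mathlib

/-!
Given `X = x`, the variable `U = (Y - ρx)/√(1-ρ²)` has the skew-normal density `2 φ(u) Φ(a u)`
with `a = √(1-ρ²) h(x)`, whose mean is `√(2/π) a/√(1+a²)`: `φ(u) Φ(au)` integrates to `1/2` by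
the symmetry `Φ(-t) = 1 - Φ(t)`, and `u φ(u) Φ(au)` has the antiderivative
`a/(√(2π)√(1+a²)) Φ(√(1+a²) u) - φ(u) Φ(au)` because `φ(u) φ(au) = φ(√(1+a²) u)/√(2π)`.
The algebraic identity turns `a/√(1+a²)` into `√(1-ρ²) s(x)`, so
`E[Y | X = x] = ρx + √(2/π)(1-ρ²) s(x)`; integrating against `φ(x)` gives `√(2/π)(1-ρ²) S`,
the term `ρ E[X]` vanishing.
-/

open MeasureTheory

noncomputable def stdNormalPDF (x : ℝ) : ℝ :=
  (Real.sqrt (2 * Real.pi))⁻¹ * Real.exp (-x ^ 2 / 2)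

noncomputable def stdNormalCDF (t : ℝ) : ℝ :=
  ∫ u in Set.Iic t, stdNormalPDF u

/-- Standard bivariate normal density with correlation ρ. -/
noncomputable def biNormalPDF (ρ : ℝ) (p : ℝ × ℝ) : ℝ :=
  (2 * Real.pi * Real.sqrt (1 - ρ ^ 2))⁻¹ *
    Real.exp (-(p.1 ^ 2 - 2 * ρ * p.1 * p.2 + p.2 ^ 2) / (2 * (1 - ρ ^ 2)))

open Real Set Filter Topology ProbabilityTheory

lemma stdNormalPDF_eq_gaussianPDFReal : stdNormalPDF = gaussianPDFReal 0 1 := by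
  ext x
  simp [stdNormalPDF, gaussianPDFReal]

lemma stdNormalPDF_neg (x : ℝ) : stdNormalPDF (-x) = stdNormalPDF x := by
  simp [stdNormalPDF]

lemma continuous_stdNormalPDF : Continuous stdNormalPDF := by
  unfold stdNormalPDF; fun_prop

lemma integrable_stdNormalPDF : Integrable stdNormalPDF := by
  rw [stdNormalPDF_eq_gaussianPDFReal]
  exact integrable_gaussianPDFReal 0 1

lemma integral_stdNormalPDF : ∫ x, stdNormalPDF x = 1 := by
  rw [stdNormalPDF_eq_gaussianPDFReal]
  exact integral_gaussianPDFReal_eq_one 0 one_ne_zero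

lemma hasDerivAt_stdNormalPDF (x : ℝ) :
    HasDerivAt stdNormalPDF (-x * stdNormalPDF x) x := by
  have h : HasDerivAt (fun y : ℝ => -y ^ 2 / 2) (-x) x :=
    ((hasDerivAt_pow 2 x).neg.div_const 2).congr_deriv (by push_cast; ring)
  exact (h.exp.const_mul (√(2 * π))⁻¹).congr_deriv (by simp only [stdNormalPDF]; ring)

lemma tendsto_stdNormalPDF_cocompact : Tendsto stdNormalPDF (cocompact ℝ) (𝓝 0) := by
  have h : Tendsto (fun x : ℝ => -‖x‖ ^ 2 / 2) (cocompact ℝ) atBot :=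
    (tendsto_neg_atTop_atBot.comp
      ((tendsto_pow_atTop two_ne_zero).comp tendsto_norm_cocompact_atTop)).atBot_div_const
      two_pos
  have h' := (tendsto_exp_atBot.comp h).const_mul (√(2 * π))⁻¹
  rw [mul_zero] at h'
  refine h'.congr fun x => ?_
  simp only [Function.comp, Real.norm_eq_abs, sq_abs, stdNormalPDF]

lemma integrable_id_mul_stdNormalPDF : Integrable fun x => x * stdNormalPDF x := by
  have h := (integrable_mul_exp_neg_mul_sq (b := 1 / 2) (by norm_num)).const_mul (√(2 * π))⁻¹
  convert h using 2 with x
  simp only [stdNormalPDF]; ring_nf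

lemma integral_id_mul_stdNormalPDF : ∫ x, x * stdNormalPDF x = 0 := by
  have h := integral_neg_eq_self (fun x => x * stdNormalPDF x) volume
  simp only [stdNormalPDF_neg, neg_mul, integral_neg] at h
  linarith

lemma stdNormalPDF_mul_stdNormalPDF_mul (a u : ℝ) :
    stdNormalPDF u * stdNormalPDF (a * u) = (√(2 * π))⁻¹ * stdNormalPDF (√(1 + a ^ 2) * u) := by
  simp only [stdNormalPDF, mul_pow, sq_sqrt (by positivity : (0 : ℝ) ≤ 1 + a ^ 2)]
  rw [mul_mul_mul_comm, ← exp_add]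
  ring_nf

lemma stdNormalCDF_eq_cdf : stdNormalCDF = cdf (gaussianReal 0 1) := by
  ext t
  rw [cdf_eq_real, measureReal_def, gaussianReal_apply_eq_integral 0 one_ne_zero,
    ENNReal.toReal_ofReal (setIntegral_nonneg measurableSet_Iic fun x _ =>
      gaussianPDFReal_nonneg 0 1 x), stdNormalCDF, stdNormalPDF_eq_gaussianPDFReal]

lemma norm_stdNormalCDF_le_one (t : ℝ) : ‖stdNormalCDF t‖ ≤ 1 := by
  rw [stdNormalCDF_eq_cdf, Real.norm_of_nonneg (cdf_nonneg _ t)]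
  exact cdf_le_one _ t

lemma hasDerivAt_stdNormalCDF (t : ℝ) : HasDerivAt stdNormalCDF (stdNormalPDF t) t := by
  have h : (fun u => stdNormalCDF 0 + ∫ x in (0 : ℝ)..u, stdNormalPDF x) = stdNormalCDF := by
    ext u
    rw [← intervalIntegral.integral_Iic_sub_Iic integrable_stdNormalPDF.integrableOn
      integrable_stdNormalPDF.integrableOn, stdNormalCDF, stdNormalCDF, add_sub_cancel]
  rw [← h]
  exact (continuous_stdNormalPDF.integral_hasStrictDerivAt 0 t).hasDerivAt.const_add _

lemma continuous_stdNormalCDF : Continuous stdNormalCDF :=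
  continuous_iff_continuousAt.2 fun t => (hasDerivAt_stdNormalCDF t).continuousAt

lemma stdNormalCDF_neg (t : ℝ) : stdNormalCDF (-t) = 1 - stdNormalCDF t := by
  have h := intervalIntegral.integral_Iic_add_Ioi (b := t)
    integrable_stdNormalPDF.integrableOn integrable_stdNormalPDF.integrableOn
  have h' : ∫ x in Ioi t, stdNormalPDF x = stdNormalCDF (-t) := by
    rw [stdNormalCDF, ← integral_comp_neg_Ioi]
    simp only [stdNormalPDF_neg]
  rw [integral_stdNormalPDF, h'] at h
  change stdNormalCDF t + stdNormalCDF (-t) = 1 at h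
  linarith

lemma tendsto_stdNormalCDF_atTop : Tendsto stdNormalCDF atTop (𝓝 1) :=
  stdNormalCDF_eq_cdf ▸ tendsto_cdf_atTop _

lemma tendsto_stdNormalCDF_atBot : Tendsto stdNormalCDF atBot (𝓝 0) :=
  stdNormalCDF_eq_cdf ▸ tendsto_cdf_atBot _

lemma MeasureTheory.Integrable.mul_stdNormalCDF_comp {f g : ℝ → ℝ} (hf : Integrable f)
    (hg : Measurable g) : Integrable fun u => f u * stdNormalCDF (g u) :=
  hf.mul_bdd (continuous_stdNormalCDF.measurable.comp hg).aestronglyMeasurable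
    (ae_of_all _ fun u => norm_stdNormalCDF_le_one (g u))

lemma tendsto_stdNormalPDF_mul_stdNormalCDF_comp {l : Filter ℝ} (hl : l ≤ cocompact ℝ)
    (g : ℝ → ℝ) : Tendsto (fun u => stdNormalPDF u * stdNormalCDF (g u)) l (𝓝 0) :=
  (tendsto_stdNormalPDF_cocompact.mono_left hl).zero_mul_isBoundedUnder_le
    (isBoundedUnder_of ⟨1, fun u => norm_stdNormalCDF_le_one (g u)⟩)

lemma integral_stdNormalPDF_mul_stdNormalCDF_mul (a : ℝ) :
    ∫ u, stdNormalPDF u * stdNormalCDF (a * u) = 1 / 2 := by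
  have hint := integrable_stdNormalPDF.mul_stdNormalCDF_comp (measurable_const_mul a)
  have hsymm : ∫ u, stdNormalPDF u * stdNormalCDF (a * u)
      = ∫ u, stdNormalPDF u * (1 - stdNormalCDF (a * u)) := by
    rw [← integral_neg_eq_self]
    simp only [stdNormalPDF_neg, mul_neg, stdNormalCDF_neg]
  simp only [mul_one_sub] at hsymm
  rw [integral_sub integrable_stdNormalPDF hint, integral_stdNormalPDF] at hsymm
  linarith

lemma integral_id_mul_stdNormalPDF_mul_stdNormalCDF_mul (a : ℝ) :
    ∫ u, u * stdNormalPDF u * stdNormalCDF (a * u) = a / (√(1 + a ^ 2) * √(2 * π)) := by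
  set b := √(1 + a ^ 2)
  have hb : 0 < b := by positivity
  set c := a / (b * √(2 * π))
  have hderiv (u : ℝ) : HasDerivAt (fun u => c * stdNormalCDF (b * u)
      - stdNormalPDF u * stdNormalCDF (a * u)) (u * stdNormalPDF u * stdNormalCDF (a * u)) u := by
    have hΦa := (hasDerivAt_stdNormalCDF (a * u)).comp u ((hasDerivAt_id u).const_mul a)
    have hΦb := (hasDerivAt_stdNormalCDF (b * u)).comp u ((hasDerivAt_id u).const_mul b)
    have key : stdNormalPDF u * stdNormalPDF (a * u) = (√(2 * π))⁻¹ * stdNormalPDF (b * u) :=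
      stdNormalPDF_mul_stdNormalPDF_mul a u
    have hcb : c * b = a / √(2 * π) := by simp only [c]; field_simp
    refine ((hΦb.const_mul c).sub ((hasDerivAt_stdNormalPDF u).mul hΦa)).congr_deriv ?_
    simp only [Function.comp, mul_one]
    linear_combination stdNormalPDF (b * u) * hcb - a * key
  have hbot : Tendsto (fun u => c * stdNormalCDF (b * u)
      - stdNormalPDF u * stdNormalCDF (a * u)) atBot (𝓝 (c * 0 - 0)) :=
    ((tendsto_stdNormalCDF_atBot.comp (tendsto_id.const_mul_atBot hb)).const_mul c).sub
      (tendsto_stdNormalPDF_mul_stdNormalCDF_comp atBot_le_cocompact _)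
  have htop : Tendsto (fun u => c * stdNormalCDF (b * u)
      - stdNormalPDF u * stdNormalCDF (a * u)) atTop (𝓝 (c * 1 - 0)) :=
    ((tendsto_stdNormalCDF_atTop.comp (tendsto_id.const_mul_atTop hb)).const_mul c).sub
      (tendsto_stdNormalPDF_mul_stdNormalCDF_comp atTop_le_cocompact _)
  rw [integral_of_hasDerivAt_of_tendsto hderiv
    (integrable_id_mul_stdNormalPDF.mul_stdNormalCDF_comp (measurable_const_mul a)) hbot htop]
  ring

lemma integral_comp_const_add_mul (g : ℝ → ℝ) (c : ℝ) {σ : ℝ} (hσ : 0 < σ) :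
    ∫ u, g (c + σ * u) = σ⁻¹ * ∫ y, g y := by
  rw [Measure.integral_comp_mul_left (fun v => g (c + v)) σ, integral_add_left_eq_self,
    abs_of_pos (inv_pos.2 hσ), smul_eq_mul]

lemma biNormalPDF_eq {ρ : ℝ} (hρ : |ρ| < 1) (x y : ℝ) :
    biNormalPDF ρ (x, y) =
      stdNormalPDF x * stdNormalPDF ((y - ρ * x) / √(1 - ρ ^ 2)) / √(1 - ρ ^ 2) := by
  have hρ2 : 0 < 1 - ρ ^ 2 := by nlinarith [abs_lt.1 hρ]
  have hσ : 0 < √(1 - ρ ^ 2) := sqrt_pos.2 hρ2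
  have hπ : √(2 * π) ^ 2 = 2 * π := sq_sqrt (by positivity)
  have hexp : -x ^ 2 / 2 + -((y - ρ * x) / √(1 - ρ ^ 2)) ^ 2 / 2
      = -(x ^ 2 - 2 * ρ * x * y + y ^ 2) / (2 * (1 - ρ ^ 2)) := by
    rw [div_pow, sq_sqrt hρ2.le]; field_simp; ring
  simp only [biNormalPDF, stdNormalPDF]
  rw [mul_mul_mul_comm, ← exp_add, hexp]
  field_simp
  rw [hπ]

lemma integral_mul_two_mul_biNormalPDF_mul_stdNormalCDF {ρ : ℝ} (hρ : |ρ| < 1) (x t : ℝ) :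
    ∫ y, y * (2 * biNormalPDF ρ (x, y) * stdNormalCDF ((y - ρ * x) * t))
      = √(2 / π) * (1 - ρ ^ 2) * (t / √(1 + (1 - ρ ^ 2) * t ^ 2)) * stdNormalPDF x
        + ρ * (x * stdNormalPDF x) := by
  have hρ2 : 0 < 1 - ρ ^ 2 := by nlinarith [abs_lt.1 hρ]
  set σ := √(1 - ρ ^ 2) with hσdef
  have hσ : 0 < σ := sqrt_pos.2 hρ2
  have hσ2 : σ ^ 2 = 1 - ρ ^ 2 := sq_sqrt hρ2.le
  calc ∫ y, y * (2 * biNormalPDF ρ (x, y) * stdNormalCDF ((y - ρ * x) * t))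
      = σ * ∫ u, (ρ * x + σ * u) *
          (2 * biNormalPDF ρ (x, ρ * x + σ * u) * stdNormalCDF ((ρ * x + σ * u - ρ * x) * t)) := by
        rw [integral_comp_const_add_mul (fun y => y * (2 * biNormalPDF ρ (x, y) *
          stdNormalCDF ((y - ρ * x) * t))) _ hσ, mul_inv_cancel_left₀ hσ.ne']
    _ = ∫ u, 2 * stdNormalPDF x * (ρ * x) * (stdNormalPDF u * stdNormalCDF (σ * t * u))
          + 2 * stdNormalPDF x * σ * (u * stdNormalPDF u * stdNormalCDF (σ * t * u)) := by
        rw [← integral_const_mul]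
        congr 1 with u
        rw [biNormalPDF_eq hρ, ← hσdef, add_sub_cancel_left, mul_div_cancel_left₀ u hσ.ne',
          mul_right_comm σ u t]
        field_simp
    _ = 2 * stdNormalPDF x * (ρ * x) * (1 / 2)
          + 2 * stdNormalPDF x * σ * (σ * t / (√(1 + (σ * t) ^ 2) * √(2 * π))) := by
        rw [integral_add, integral_const_mul, integral_const_mul,
          integral_stdNormalPDF_mul_stdNormalCDF_mul,
          integral_id_mul_stdNormalPDF_mul_stdNormalCDF_mul]
        · exact (integrable_stdNormalPDF.mul_stdNormalCDF_comp
            (measurable_const_mul (σ * t))).const_mul _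
        · exact (integrable_id_mul_stdNormalPDF.mul_stdNormalCDF_comp
            (measurable_const_mul (σ * t))).const_mul _
    _ = _ := by
        have ha2 : (σ * t) ^ 2 = (1 - ρ ^ 2) * t ^ 2 := by rw [mul_pow, hσ2]
        have hsqrt : √(2 / π) = 2 / √(2 * π) := by
          rw [eq_div_iff (by positivity), ← sqrt_mul (by positivity),
            show 2 / π * (2 * π) = 2 ^ 2 by field_simp, sqrt_sq zero_le_two]
        rw [ha2, hsqrt]
        field_simp
        linear_combination (2 * stdNormalPDF x * t) * hσ2

lemma div_sqrt_one_add_mul_sq_eq {c s h : ℝ} (hs : c * s ^ 2 < 1)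
    (hh : h = s / √(1 - c * s ^ 2)) : h / √(1 + c * h ^ 2) = s := by
  have hpos : 0 < 1 - c * s ^ 2 := by linarith
  have hσ : 0 < √(1 - c * s ^ 2) := sqrt_pos.2 hpos
  have hden : 1 + c * h ^ 2 = (1 - c * s ^ 2)⁻¹ := by
    rw [hh, div_pow, sq_sqrt hpos.le]
    field_simp
    ring
  rw [hden, sqrt_inv, hh, div_inv_eq_mul, div_mul_cancel₀ s hσ.ne']

theorem stmt12_general (ρ : ℝ) (hρ : |ρ| < 1) (s : ℝ → ℝ)
    (hsbound : ∀ x, (1 - ρ ^ 2) * s x ^ 2 < 1)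
    (S : ℝ) (hS : ∫ x, s x * stdNormalPDF x = S)
    (h : ℝ → ℝ) (hdef : ∀ x, h x = s x / Real.sqrt (1 - (1 - ρ ^ 2) * s x ^ 2))
    (hint : Integrable (fun p : ℝ × ℝ =>
      p.2 * (2 * biNormalPDF ρ p * stdNormalCDF ((p.2 - ρ * p.1) * h p.1)))) :
    (∀ x, h x / Real.sqrt (1 + (1 - ρ ^ 2) * h x ^ 2) = s x) ∧
    ∫ p : ℝ × ℝ, p.2 * (2 * biNormalPDF ρ p * stdNormalCDF ((p.2 - ρ * p.1) * h p.1))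
      = Real.sqrt (2 / Real.pi) * (1 - ρ ^ 2) * S := by
  have hs : ∀ x, h x / √(1 + (1 - ρ ^ 2) * h x ^ 2) = s x := fun x =>
    div_sqrt_one_add_mul_sq_eq (hsbound x) (hdef x)
  refine ⟨hs, ?_⟩
  have hinner : (fun x => ∫ y, y * (2 * biNormalPDF ρ (x, y) * stdNormalCDF ((y - ρ * x) * h x)))
      = fun x => √(2 / π) * (1 - ρ ^ 2) * (s x * stdNormalPDF x) + ρ * (x * stdNormalPDF x) := by
    ext x
    rw [integral_mul_two_mul_biNormalPDF_mul_stdNormalCDF hρ, hs]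
    ring
  have hmean := integrable_id_mul_stdNormalPDF.const_mul ρ
  have hsφ : Integrable fun x => √(2 / π) * (1 - ρ ^ 2) * (s x * stdNormalPDF x) := by
    have hmarginal := hint.integral_prod_left
    rwa [hinner, integrable_add_iff_integrable_left' hmean] at hmarginal
  rw [Measure.volume_eq_prod, integral_prod _ hint, hinner, integral_add hsφ hmean,
    integral_const_mul, integral_const_mul, hS, integral_id_mul_stdNormalPDF, mul_zero, add_zero]

theorem stmt12 (ρ : ℝ) (hρ : |ρ| < 1) (s : ℝ → ℝ) (hs : Measurable s)
    (hsbound : ∀ x, (1 - ρ ^ 2) * s x ^ 2 < 1)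
    (S : ℝ) (hS : ∫ x, s x * stdNormalPDF x = S)
    (h : ℝ → ℝ) (hdef : ∀ x, h x = s x / Real.sqrt (1 - (1 - ρ ^ 2) * s x ^ 2))
    (hint : Integrable (fun p : ℝ × ℝ =>
      p.2 * (2 * biNormalPDF ρ p * stdNormalCDF ((p.2 - ρ * p.1) * h p.1)))) :
    (∀ x, h x / Real.sqrt (1 + (1 - ρ ^ 2) * h x ^ 2) = s x) ∧
    ∫ p : ℝ × ℝ, p.2 * (2 * biNormalPDF ρ p * stdNormalCDF ((p.2 - ρ * p.1) * h p.1))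
      = Real.sqrt (2 / Real.pi) * (1 - ρ ^ 2) * S :=
  stmt12_general ρ hρ s hsbound S hS h hdef hint
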